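/- Let s₁, s₂, s₃ : ℝ → ℝ³ be differentiable functions satisfying the equations of motion. Then the total spin vector S(t) := s₁(t) + s₂(t) + s₃(t) is constant in t, and the energy H(t) := J₁ s₂(t)·s₃(t) + J₂ s₃(t)·s₁(t) + J₃ s₁(t)·s₂(t) is constant in t. In particular S², the third component S⁽³⁾ of S, and H are conserved quantities. -/

import Mathlib

open Matrix

/-!
Differentiating, `Ṡ` is a sum of cross products `J (sᵢ × sⱼ + sⱼ × sᵢ)`, which vanish by
antisymmetry. By the product rule, with `T = (s₁ × s₂) ⬝ s₃`, the three terms of `Ḣ` are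
`J₁ (J₃ - J₂) T`, `J₂ (J₁ - J₃) T` and `J₃ (J₂ - J₁) T`, which add up to zero.
-/

theorem HasDerivAt.dotProduct {𝕜 ι : Type*} [NontriviallyNormedField 𝕜] [Fintype ι]
    {u v : 𝕜 → ι → 𝕜} {u' v' : ι → 𝕜} {t : 𝕜} (hu : HasDerivAt u u' t)
    (hv : HasDerivAt v v' t) :
    HasDerivAt (fun t => u t ⬝ᵥ v t) (u' ⬝ᵥ v t + u t ⬝ᵥ v') t := by
  have hsum := HasDerivAt.fun_sum fun i (_ : i ∈ Finset.univ) =>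
    (hasDerivAt_pi.mp hu i).fun_mul (hasDerivAt_pi.mp hv i)
  simp only [_root_.dotProduct, ← Finset.sum_add_distrib]
  exact hsum

theorem eq_of_forall_hasDerivAt_zero {𝕜 G : Type*} [RCLike 𝕜] [NormedAddCommGroup G]
    [NormedSpace 𝕜 G] {f : 𝕜 → G} (hf : ∀ x, HasDerivAt f 0 x) (x y : 𝕜) : f x = f y :=
  is_const_of_deriv_eq_zero (fun x => (hf x).differentiableAt) (fun x => (hf x).deriv) x y

section SpinTriangle

variable {R : Type*} [CommRing R] (J₁ J₂ J₃ : R) (a b c : Fin 3 → R)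

theorem spinTriangle_cross_sum_eq_zero :
    (J₂ • c + J₃ • b) ⨯₃ a + (J₃ • a + J₁ • c) ⨯₃ b + (J₁ • b + J₂ • a) ⨯₃ c = 0 := by
  simp only [map_add, map_smul, LinearMap.add_apply, LinearMap.smul_apply]
  linear_combination (norm := module)
    J₂ • cross_anticomm' c a + J₃ • cross_anticomm' b a + J₁ • cross_anticomm' c b

theorem spinTriangle_energy_rate_eq_zero :
    J₁ * ((J₃ • a + J₁ • c) ⨯₃ b ⬝ᵥ c + b ⬝ᵥ (J₁ • b + J₂ • a) ⨯₃ c)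
      + J₂ * ((J₁ • b + J₂ • a) ⨯₃ c ⬝ᵥ a + c ⬝ᵥ (J₂ • c + J₃ • b) ⨯₃ a)
      + J₃ * ((J₂ • c + J₃ • b) ⨯₃ a ⬝ᵥ b + a ⬝ᵥ (J₃ • a + J₁ • c) ⨯₃ b) = 0 := by
  simp only [cross_apply, dotProduct, Fin.sum_univ_three, Pi.add_apply, Pi.smul_apply, smul_eq_mul,
    cons_val_zero, cons_val_one, cons_val]
  ring

end SpinTriangle

theorem total_spin_and_energy_conserved (J₁ J₂ J₃ : ℝ) (s₁ s₂ s₃ : ℝ → Fin 3 → ℝ)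
    (hd₁ : Differentiable ℝ s₁) (hd₂ : Differentiable ℝ s₂) (hd₃ : Differentiable ℝ s₃)
    (h₁ : ∀ t, deriv s₁ t = crossProduct (J₂ • s₃ t + J₃ • s₂ t) (s₁ t))
    (h₂ : ∀ t, deriv s₂ t = crossProduct (J₃ • s₁ t + J₁ • s₃ t) (s₂ t))
    (h₃ : ∀ t, deriv s₃ t = crossProduct (J₁ • s₂ t + J₂ • s₁ t) (s₃ t)) :
    (∀ t : ℝ, s₁ t + s₂ t + s₃ t = s₁ 0 + s₂ 0 + s₃ 0) ∧
    (∀ t : ℝ,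
      J₁ * (s₂ t ⬝ᵥ s₃ t) + J₂ * (s₃ t ⬝ᵥ s₁ t) + J₃ * (s₁ t ⬝ᵥ s₂ t)
        = J₁ * (s₂ 0 ⬝ᵥ s₃ 0) + J₂ * (s₃ 0 ⬝ᵥ s₁ 0) + J₃ * (s₁ 0 ⬝ᵥ s₂ 0)) ∧
    (∀ t : ℝ, (s₁ t + s₂ t + s₃ t) ⬝ᵥ (s₁ t + s₂ t + s₃ t)
        = (s₁ 0 + s₂ 0 + s₃ 0) ⬝ᵥ (s₁ 0 + s₂ 0 + s₃ 0)) ∧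
    (∀ t : ℝ, (s₁ t + s₂ t + s₃ t) 2 = (s₁ 0 + s₂ 0 + s₃ 0) 2) := by
  have hs₁ t : HasDerivAt s₁ _ t := h₁ t ▸ (hd₁ t).hasDerivAt
  have hs₂ t : HasDerivAt s₂ _ t := h₂ t ▸ (hd₂ t).hasDerivAt
  have hs₃ t : HasDerivAt s₃ _ t := h₃ t ▸ (hd₃ t).hasDerivAt
  have hS t : s₁ t + s₂ t + s₃ t = s₁ 0 + s₂ 0 + s₃ 0 :=
    eq_of_forall_hasDerivAt_zero (f := fun t => s₁ t + s₂ t + s₃ t) (fun t => by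
      simpa only [spinTriangle_cross_sum_eq_zero] using
        ((hs₁ t).fun_add (hs₂ t)).fun_add (hs₃ t)) t 0
  have hH t : J₁ * (s₂ t ⬝ᵥ s₃ t) + J₂ * (s₃ t ⬝ᵥ s₁ t) + J₃ * (s₁ t ⬝ᵥ s₂ t)
      = J₁ * (s₂ 0 ⬝ᵥ s₃ 0) + J₂ * (s₃ 0 ⬝ᵥ s₁ 0) + J₃ * (s₁ 0 ⬝ᵥ s₂ 0) :=
    eq_of_forall_hasDerivAt_zero (fun t => by
      simpa only [spinTriangle_energy_rate_eq_zero] using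
        ((((hs₂ t).dotProduct (hs₃ t)).const_mul J₁).add
          (((hs₃ t).dotProduct (hs₁ t)).const_mul J₂)).add
          (((hs₁ t).dotProduct (hs₂ t)).const_mul J₃)) t 0
  exact ⟨hS, hH, fun t => by rw [hS t], fun t => by rw [hS t]⟩
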